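/- Let G = N ⋊ H be a semidirect product of groups, and identify N and H with subgroups of G. Let K₁ be the normal subgroup of G ⊗ G generated by all elements g ⊗ n and n ⊗ g with g ∈ G, n ∈ N. Then the sequence 1 → K₁ → G ⊗ G → H ⊗ H → 1, where the right-hand map is induced by the projection p : G → H, is exact and splits on the right via the map induced by the inclusion H → G; consequently G ⊗ G ≅ K₁ ⋊ (H ⊗ H). -/

import Mathlib

/- Nonabelian tensor square framework (Brown–Loday). -/

namespace NATensor

variable (G : Type*) [Group G]

/-- The relator set for the nonabelian tensor square of `G`:
`g g' ⊗ h = (ᵍg' ⊗ ᵍh)(g ⊗ h)` and `g ⊗ h h' = (g ⊗ h)(ʰg ⊗ ʰh')`. -/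
def rels : Set (FreeGroup (G × G)) :=
  {r | (∃ g g' h : G,
          r = FreeGroup.of (g * g', h) *
              (FreeGroup.of (g * g' * g⁻¹, g * h * g⁻¹) * FreeGroup.of (g, h))⁻¹) ∨
       (∃ g h h' : G,
          r = FreeGroup.of (g, h * h') *
              (FreeGroup.of (g, h) * FreeGroup.of (h * g * h⁻¹, h * h' * h⁻¹))⁻¹)}

/-- The nonabelian tensor square `G ⊗ G`. -/
abbrev TS := PresentedGroup (rels G)

variable {G}

/-- The generator `g ⊗ h` of the nonabelian tensor square. -/
def tmul (g h : G) : TS G := PresentedGroup.of (g, h)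

lemma mk_rel_eq_one {r : FreeGroup (G × G)} (hr : r ∈ rels G) :
    (PresentedGroup.mk (rels G) r : TS G) = 1 :=
  (QuotientGroup.eq_one_iff r).mpr (Subgroup.subset_normalClosure hr)

lemma tmul_rel₁ (g g' h : G) :
    tmul (g * g') h = tmul (g * g' * g⁻¹) (g * h * g⁻¹) * tmul g h := by
  have h1 := mk_rel_eq_one (G := G) (Or.inl ⟨g, g', h, rfl⟩)
  simp only [map_mul, map_inv, mul_inv_eq_one] at h1
  exact h1

lemma tmul_rel₂ (g h h' : G) :
    tmul g (h * h') = tmul g h * tmul (h * g * h⁻¹) (h * h' * h⁻¹) := by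
  have h1 := mk_rel_eq_one (G := G) (Or.inr ⟨g, h, h', rfl⟩)
  simp only [map_mul, map_inv, mul_inv_eq_one] at h1
  exact h1

variable (G)

/-- The homomorphism `κ : G ⊗ G → G`, `g ⊗ h ↦ [g,h] = g h g⁻¹ h⁻¹` (its image is `[G,G]`). -/
def kappa : TS G →* G :=
  PresentedGroup.toGroup (f := fun x : G × G => x.1 * x.2 * x.1⁻¹ * x.2⁻¹) (by
    rintro r (⟨g, g', h, rfl⟩ | ⟨g, h, h', rfl⟩) <;>
      simp only [map_mul, map_inv, FreeGroup.lift_apply_of] <;> group)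

variable {G}

@[simp] lemma kappa_tmul (g h : G) : kappa G (tmul g h) = g * h * g⁻¹ * h⁻¹ :=
  PresentedGroup.toGroup.of _

variable (G)

/-- `J(G) = ker κ ≅ π₃(SK(G,1))`. -/
def J : Subgroup (TS G) := (kappa G).ker

/-- `∇(G)`: the (normal) subgroup of `G ⊗ G` generated by the elements `x ⊗ x`. -/
def nabla : Subgroup (TS G) :=
  Subgroup.normalClosure {t | ∃ x : G, t = tmul x x}

/-- `Δ(G)`: the (normal) subgroup of `G ⊗ G` generated by the `(x ⊗ y)(y ⊗ x)`. -/
def delta : Subgroup (TS G) :=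
  Subgroup.normalClosure {t | ∃ x y : G, t = tmul x y * tmul y x}

instance : (nabla G).Normal := Subgroup.normalClosure_normal

instance : (delta G).Normal := Subgroup.normalClosure_normal

/-- The exterior square `G ∧ G = (G ⊗ G)/∇(G)`. -/
abbrev ES := TS G ⧸ nabla G

/-- The symmetric square `G ⊗̃ G = (G ⊗ G)/Δ(G)`. -/
abbrev SS := TS G ⧸ delta G

variable {G}

/-- The element `g ∧ h` of the exterior square. -/
def emul (g h : G) : ES G := QuotientGroup.mk' (nabla G) (tmul g h)

/-- The image of `g ⊗ h` in the symmetric square. -/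
def smul (g h : G) : SS G := QuotientGroup.mk' (delta G) (tmul g h)

variable {H : Type*} [Group H]

/-- The induced homomorphism `G ⊗ G → H ⊗ H` of a homomorphism `f : G → H`. -/
def tmap (f : G →* H) : TS G →* TS H :=
  PresentedGroup.toGroup (f := fun x : G × G => tmul (f x.1) (f x.2)) (by
    rintro r (⟨g, g', h, rfl⟩ | ⟨g, h, h', rfl⟩) <;>
      simp only [map_mul, map_inv, FreeGroup.lift_apply_of, mul_inv_eq_one]
    · rw [tmul_rel₁]
    · rw [tmul_rel₂])

@[simp] lemma tmap_tmul (f : G →* H) (g h : G) :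
    tmap f (tmul g h) = tmul (f g) (f h) :=
  PresentedGroup.toGroup.of _

lemma nabla_le_comap_nabla (f : G →* H) :
    nabla G ≤ MonoidHom.ker ((QuotientGroup.mk' (nabla H)).comp (tmap f)) := by
  refine Subgroup.normalClosure_le_normal ?_
  rintro _ ⟨y, rfl⟩
  simp only [SetLike.mem_coe, MonoidHom.mem_ker, MonoidHom.comp_apply, tmap_tmul,
    QuotientGroup.mk'_apply, QuotientGroup.eq_one_iff]
  exact Subgroup.subset_normalClosure ⟨f y, rfl⟩

lemma delta_le_comap_delta (f : G →* H) :
    delta G ≤ MonoidHom.ker ((QuotientGroup.mk' (delta H)).comp (tmap f)) := by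
  refine Subgroup.normalClosure_le_normal ?_
  rintro _ ⟨x, y, rfl⟩
  simp only [SetLike.mem_coe, MonoidHom.mem_ker, MonoidHom.comp_apply, map_mul, tmap_tmul,
    QuotientGroup.mk'_apply, ← QuotientGroup.mk_mul, QuotientGroup.eq_one_iff]
  exact Subgroup.subset_normalClosure ⟨f x, f y, rfl⟩

/-- The induced homomorphism `G ∧ G → H ∧ H` of a homomorphism `f : G → H`. -/
def emap (f : G →* H) : ES G →* ES H :=
  QuotientGroup.lift (nabla G) ((QuotientGroup.mk' (nabla H)).comp (tmap f))
    (fun x hx => MonoidHom.mem_ker.mp (nabla_le_comap_nabla f hx))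

@[simp] lemma emap_emul (f : G →* H) (g h : G) :
    emap f (emul g h) = emul (f g) (f h) := by
  simp [emap, emul, QuotientGroup.mk'_apply, QuotientGroup.lift_mk']
  exact congrArg (QuotientGroup.mk' (nabla H)) (tmap_tmul f g h)

/-- The induced homomorphism `G ⊗̃ G → H ⊗̃ H` of a homomorphism `f : G → H`. -/
def smap (f : G →* H) : SS G →* SS H :=
  QuotientGroup.lift (delta G) ((QuotientGroup.mk' (delta H)).comp (tmap f))
    (fun x hx => MonoidHom.mem_ker.mp (delta_le_comap_delta f hx))

variable (G)

lemma nabla_le_ker_kappa : nabla G ≤ (kappa G).ker := by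
  refine Subgroup.normalClosure_le_normal ?_
  rintro _ ⟨x, rfl⟩
  simp only [SetLike.mem_coe, MonoidHom.mem_ker, kappa_tmul]
  group

/-- The homomorphism `κ' : G ∧ G → G`, `g ∧ h ↦ [g,h]` (its image is `[G,G]`). -/
def kappa' : ES G →* G :=
  QuotientGroup.lift (nabla G) (kappa G)
    (fun x hx => MonoidHom.mem_ker.mp (nabla_le_ker_kappa G hx))

/-- The Schur multiplier `M(G) = ker κ' ≅ H₂(G)`. -/
def M : Subgroup (ES G) := (kappa' G).ker

/-- `J̃(G) = J(G)/Δ(G) ≅ π₂ˢ(K(G,1))`, realized as the image of `J(G)` in `G ⊗̃ G`. -/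
def Jt : Subgroup (SS G) := Subgroup.map (QuotientGroup.mk' (delta G)) (J G)

/-- `∇(G)/Δ(G)`, realized as the image of `∇(G)` in `G ⊗̃ G`. -/
def nablaBar : Subgroup (SS G) := Subgroup.map (QuotientGroup.mk' (delta G)) (nabla G)

end NATensor

open NATensor

/-- `K₁`: the normal subgroup of `G ⊗ G` (for `G = N ⋊ H`) generated by the elements
`g ⊗ n` and `n ⊗ g` with `g ∈ G`, `n ∈ N`. -/
def K₁ (N H : Type*) [Group N] [Group H] (φ : H →* MulAut N) : Subgroup (TS (N ⋊[φ] H)) :=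
  Subgroup.normalClosure
    {t | ∃ (g : N ⋊[φ] H) (n : N),
      t = tmul g (SemidirectProduct.inl n) ∨ t = tmul (SemidirectProduct.inl n) g}

/-! Modulo `K₁`, the class of `x ⊗ y` only depends on the `H`-components of `x` and `y`: the
defining relations peel a factor `n ∈ N` off the left of either entry at the cost of a
generator `n ⊗ _` or `_ ⊗ n` of `K₁`. Writing `x = inl n * inr h`, this identifies `x ⊗ y`
with `s (p (x ⊗ y))` modulo `K₁`, where `p` and `s` are induced by the projection and the
inclusion of `H`; so `K₁` contains the kernel of `p`, and the reverse inclusion holds because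
`p` kills `N`. As `p ∘ s = 1`, the extension splits. -/

namespace NATensor

variable {G H : Type*} [Group G] [Group H]

theorem tmul_one (g : G) : tmul g (1 : G) = 1 := by
  simpa using tmul_rel₂ g (1 : G) 1

theorem one_tmul (g : G) : tmul (1 : G) g = 1 := by
  simpa using tmul_rel₁ (1 : G) 1 g

theorem tmap_id : tmap (MonoidHom.id G) = MonoidHom.id (TS G) :=
  PresentedGroup.ext fun _ => tmap_tmul _ _ _

theorem tmap_comp {K : Type*} [Group K] (f : H →* K) (f' : G →* H) :
    tmap (f.comp f') = (tmap f).comp (tmap f') :=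
  PresentedGroup.ext fun _ => by simp [tmap, tmul]

theorem map_tmul_mul_left {Q : Type*} [Group Q] (q : TS G →* Q) {m : G}
    (hm : ∀ x, q (tmul m x) = 1) (a b : G) : q (tmul (m * a) b) = q (tmul a b) := by
  have h := tmul_rel₁ a (a⁻¹ * m * a) b
  rw [show a * (a⁻¹ * m * a) * a⁻¹ = m by group, show a * (a⁻¹ * m * a) = m * a by group] at h
  rw [h, map_mul, hm, one_mul]

theorem map_tmul_mul_right {Q : Type*} [Group Q] (q : TS G →* Q) {m : G}
    (hm : ∀ x, q (tmul x m) = 1) (a b : G) : q (tmul a (m * b)) = q (tmul a b) := by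
  have h := tmul_rel₂ a b (b⁻¹ * m * b)
  rw [show b * (b⁻¹ * m * b) * b⁻¹ = m by group, show b * (b⁻¹ * m * b) = m * b by group] at h
  rw [h, map_mul, hm, mul_one]

end NATensor

theorem MonoidHom.exists_mulEquiv_semidirectProduct_ker {E Q : Type*} [Group E] [Group Q]
    (p : E →* Q) (s : Q →* E) (hs : p.comp s = MonoidHom.id Q) :
    ∃ ψ : Q →* MulAut p.ker, Nonempty (E ≃* p.ker ⋊[ψ] Q) := by
  have hps : Function.LeftInverse p s := DFunLike.congr_fun hs
  let S : GroupExtension p.ker E Q :=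
    { inl := p.ker.subtype
      rightHom := p
      inl_injective := p.ker.subtype_injective
      range_inl_eq_ker_rightHom := p.ker.range_subtype
      rightHom_surjective := hps.surjective }
  let σ : S.Splitting := ⟨s, hps⟩
  exact ⟨σ.conjAct, ⟨σ.semidirectProductMulEquiv.symm⟩⟩

namespace K₁

open SemidirectProduct

variable {N H : Type*} [Group N] [Group H] {φ : H →* MulAut N}

instance normal : (K₁ N H φ).Normal := Subgroup.normalClosure_normal

theorem tmul_inl_mem (g : N ⋊[φ] H) (n : N) : tmul g (inl n) ∈ K₁ N H φ :=
  Subgroup.subset_normalClosure ⟨g, n, Or.inl rfl⟩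

theorem inl_tmul_mem (n : N) (g : N ⋊[φ] H) : tmul (inl n) g ∈ K₁ N H φ :=
  Subgroup.subset_normalClosure ⟨g, n, Or.inr rfl⟩

theorem le_ker_tmap_rightHom : K₁ N H φ ≤ (tmap (rightHom : N ⋊[φ] H →* H)).ker := by
  refine Subgroup.normalClosure_le_normal ?_
  rintro _ ⟨g, n, rfl | rfl⟩ <;> simp [tmul_one, one_tmul]

theorem mk'_comp_tmap_inr_comp_rightHom :
    (QuotientGroup.mk' (K₁ N H φ)).comp (tmap ((inr : H →* N ⋊[φ] H).comp rightHom)) =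
      QuotientGroup.mk' (K₁ N H φ) := by
  refine PresentedGroup.ext fun ⟨x, y⟩ => ?_
  have hl : ∀ (n : N) z, QuotientGroup.mk' (K₁ N H φ) (tmul (inl n) z) = 1 := fun n z =>
    (QuotientGroup.eq_one_iff _).mpr (inl_tmul_mem n z)
  have hr : ∀ (n : N) z, QuotientGroup.mk' (K₁ N H φ) (tmul z (inl n)) = 1 := fun n z =>
    (QuotientGroup.eq_one_iff _).mpr (tmul_inl_mem z n)
  change QuotientGroup.mk' _ (tmap _ (tmul x y)) = QuotientGroup.mk' _ (tmul x y)
  conv_rhs => rw [← inl_left_mul_inr_right x, ← inl_left_mul_inr_right y,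
    map_tmul_mul_left _ (hl x.left), map_tmul_mul_right _ (hr y.left)]
  rw [tmap_tmul]
  rfl

theorem ker_tmap_rightHom : (tmap (rightHom : N ⋊[φ] H →* H)).ker = K₁ N H φ := by
  refine le_antisymm (fun t ht => ?_) le_ker_tmap_rightHom
  rw [← QuotientGroup.eq_one_iff, ← QuotientGroup.mk'_apply, ← mk'_comp_tmap_inr_comp_rightHom,
    tmap_comp, MonoidHom.comp_apply, MonoidHom.comp_apply, MonoidHom.mem_ker.mp ht, map_one,
    map_one]

end K₁

/-- for `G = N ⋊ H`, the sequence `1 → K₁ → G ⊗ G → H ⊗ H → 1`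
(right map induced by the projection `p : G → H`) is exact and splits on the right via the
map induced by the inclusion `H → G`; consequently `G ⊗ G ≅ K₁ ⋊ (H ⊗ H)`. -/
theorem tensor_square_of_semidirect_product
    (N H : Type*) [Group N] [Group H] (φ : H →* MulAut N) :
    Function.Surjective (tmap (SemidirectProduct.rightHom : N ⋊[φ] H →* H)) ∧
    MonoidHom.ker (tmap (SemidirectProduct.rightHom : N ⋊[φ] H →* H)) = K₁ N H φ ∧
    (tmap (SemidirectProduct.rightHom : N ⋊[φ] H →* H)).comp
        (tmap (SemidirectProduct.inr : H →* N ⋊[φ] H)) = MonoidHom.id (TS H) ∧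
    ∃ ψ : TS H →* MulAut ↥(K₁ N H φ),
      Nonempty (TS (N ⋊[φ] H) ≃* ↥(K₁ N H φ) ⋊[ψ] TS H) := by
  have hsplit : (tmap (SemidirectProduct.rightHom : N ⋊[φ] H →* H)).comp
      (tmap SemidirectProduct.inr) = MonoidHom.id (TS H) := by
    rw [← tmap_comp, SemidirectProduct.rightHom_comp_inr, tmap_id]
  refine ⟨Function.LeftInverse.surjective (DFunLike.congr_fun hsplit),
    K₁.ker_tmap_rightHom, hsplit, ?_⟩
  rw [← K₁.ker_tmap_rightHom]
  exact MonoidHom.exists_mulEquiv_semidirectProduct_ker _ _ hsplit
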